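/- arXiv:1501.03983 — 3 statements merged into one kernel-verified Lean document; each statement's English description precedes it below -/
import Mathlib

section
/- Let H be a matrix over a field F with nα columns (n thick columns of α columns each) such that: (i) rank(H|_S) = (n−k)α for every subset S ⊆ {1, …, n} with |S| = n−k, and (ii) the row space of H contains every row of some nα×nα matrix of repair form with parameters (n, α, β). Then rank(H) ≥ (n−k)α + Σ_{j=n−k+1}^{n} max(α − (j−1)β, 0). -/
open scoped BigOperators

/-- The `(i, j)` block (of size `α × α`) of an `nα × nα` matrix. -/
def blockOf {F : Type*} [Field F] {n a : ℕ}
    (M : Matrix (Fin n × Fin a) (Fin n × Fin a) F) (i j : Fin n) :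
    Matrix (Fin a) (Fin a) F :=
  Matrix.of fun x y => M (i, x) (j, y)

/-- An `nα × nα` matrix is of repair form with parameters `(n, α, β)` if its diagonal
blocks are the identity and its off-diagonal blocks have rank at most `β`. -/
def IsRepairForm {F : Type*} [Field F] (n a b : ℕ)
    (M : Matrix (Fin n × Fin a) (Fin n × Fin a) F) : Prop :=
  (∀ i, blockOf M i i = 1) ∧ (∀ i j, i ≠ j → (blockOf M i j).rank ≤ b)

/-! Stack the rows of the repair matrix `M` below `H`; since they lie in the row space of `H`, this
does not change the rank. Let `r j` be the rank of the first `j` thick columns of the stacked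
matrix, so `r (n - k) ≥ (n - k) α` by (i). To pass from `j` to `j + 1` thick columns, project the
column space onto the coordinates of the `j`-th block row of `M`: the new thick column projects
onto the identity block, hence onto all of `F^α`, while the first `j` thick columns project into
the sum of the column spaces of `j` blocks of rank at most `β`. Hence
`r (j + 1) ≥ r j + (α - j β)`. -/

open Module Matrix Submodule Set

namespace Submodule

variable {K U W : Type*} [DivisionRing K] [AddCommGroup U] [Module K U] [AddCommGroup W]
  [Module K W]

theorem finrank_map_add_finrank_inf_ker (f : U →ₗ[K] W) (P : Submodule K U)
    [FiniteDimensional K P] :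
    finrank K (P.map f) + finrank K ↥(P ⊓ LinearMap.ker f) = finrank K P := by
  rw [← LinearMap.range_domRestrict,
    ← LinearMap.finrank_range_add_finrank_ker (f.domRestrict P), LinearMap.ker_domRestrict,
    ← map_comap_subtype, finrank_map_subtype_eq]

theorem finrank_map_add_finrank_le_finrank_add_finrank_map (f : U →ₗ[K] W)
    {P Q : Submodule K U} [FiniteDimensional K Q] (hPQ : P ≤ Q) :
    finrank K (Q.map f) + finrank K P ≤ finrank K Q + finrank K (P.map f) := by
  have := finiteDimensional_of_le hPQ
  have hP := finrank_map_add_finrank_inf_ker f P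
  have hQ := finrank_map_add_finrank_inf_ker f Q
  have hker := finrank_mono (inf_le_inf_right (LinearMap.ker f) hPQ)
  omega

theorem finrank_finset_sup_le_sum {γ : Type*} (s : Finset γ) (P : γ → Submodule K U)
    [∀ i, FiniteDimensional K (P i)] :
    finrank K ↥(s.sup P) ≤ ∑ i ∈ s, finrank K (P i) := by
  classical
  induction s using Finset.induction with
  | empty => simp
  | insert i s hi ih =>
    rw [Finset.sup_insert, Finset.sum_insert hi]
    exact (finrank_add_le_finrank_add_finrank _ _).trans (by omega)

end Submodule

theorem Matrix.rank_fromRows_le_of_row_mem_span {F m₁ m₂ κ : Type*} [Field F] [Fintype κ]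
    (H : Matrix m₁ κ F) (M : Matrix m₂ κ F) (hM : ∀ r, M r ∈ span F (range H.row)) :
    (fromRows H M).rank ≤ H.rank := by
  have hker : LinearMap.ker H.mulVecLin ≤ LinearMap.ker (fromRows H M).mulVecLin := by
    intro v hv
    rw [LinearMap.mem_ker, mulVecLin_apply] at hv ⊢
    have hrows : span F (range H.row) ≤ LinearMap.ker ((dotProductBilin F F).flip v) :=
      span_le.2 <| range_subset_iff.2 fun i => LinearMap.mem_ker.2 (congrFun hv i)
    have hMv : M *ᵥ v = 0 := funext fun r => hrows (hM r)
    rw [fromRows_mulVec, hv, hMv, Sum.elim_zero_zero]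
  have hH := LinearMap.finrank_range_add_finrank_ker H.mulVecLin
  have hHM := LinearMap.finrank_range_add_finrank_ker (fromRows H M).mulVecLin
  have := Submodule.finrank_mono hker
  unfold rank
  omega

def initialBlocks (n j : ℕ) : Finset (Fin n) :=
  {i | (i : ℕ) < j}

theorem card_initialBlocks {n j : ℕ} (hj : j ≤ n) : (initialBlocks n j).card = j := by
  rw [initialBlocks, Fin.card_filter_val_lt, min_eq_right hj]

theorem initialBlocks_succ {n j : ℕ} (hj : j < n) :
    initialBlocks n (j + 1) = insert ⟨j, hj⟩ (initialBlocks n j) := by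
  ext i
  simp only [initialBlocks, Finset.mem_filter, Finset.mem_univ, true_and, Finset.mem_insert,
    Fin.ext_iff]
  omega

section ThickColumns

variable {F ι : Type*} {n a : ℕ}

abbrev thickCols {α : Type*} (A : Matrix ι (Fin n × Fin a) α) (S : Finset (Fin n)) :
    Matrix ι {p : Fin n × Fin a // p.1 ∈ S} α :=
  A.submatrix id Subtype.val

variable [Field F] (H : Matrix ι (Fin n × Fin a) F)
  (M : Matrix (Fin n × Fin a) (Fin n × Fin a) F)

theorem map_span_col_thickCols_fromRows (j : Fin n) (T : Finset (Fin n)) :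
    (span F (range (thickCols (fromRows H M) T).col)).map
        (LinearMap.funLeft F F fun x => Sum.inr (j, x)) =
      T.sup fun i => span F (range (blockOf M j i).col) := by
  rw [map_span, ← range_comp, Finset.sup_eq_iSup, ← span_iUnion₂]
  congr 1
  ext v
  simp only [mem_range, mem_iUnion, Function.comp_apply, Subtype.exists, exists_prop]
  constructor
  · rintro ⟨⟨i, y⟩, hi, rfl⟩
    exact ⟨i, hi, y, rfl⟩
  · rintro ⟨i, hi, y, rfl⟩
    exact ⟨(i, y), hi, rfl⟩

theorem rank_thickCols_add_tsub_le_rank_thickCols_insert {j : Fin n} {S : Finset (Fin n)} {b : ℕ}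
    (hjj : blockOf M j j = 1) (hjS : ∀ i ∈ S, (blockOf M j i).rank ≤ b) :
    (thickCols (fromRows H M) S).rank + (a - S.card * b) ≤
      (thickCols (fromRows H M) (insert j S)).rank := by
  rw [rank_eq_finrank_span_cols, rank_eq_finrank_span_cols]
  set π := LinearMap.funLeft F F fun x : Fin a => (Sum.inr (j, x) : ι ⊕ Fin n × Fin a)
  set V := span F (range (thickCols (fromRows H M) S).col)
  set V' := span F (range (thickCols (fromRows H M) (insert j S)).col)
  have hVV' : V ≤ V' :=
    span_mono fun _ ⟨⟨p, hp⟩, hv⟩ => ⟨⟨p, Finset.mem_insert_of_mem hp⟩, hv⟩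
  have hV' : a ≤ finrank F (V'.map π) := by
    rw [map_span_col_thickCols_fromRows]
    calc a = (blockOf M j j).rank := by rw [hjj, rank_one, Fintype.card_fin]
      _ = finrank F (span F (range (blockOf M j j).col)) := rank_eq_finrank_span_cols _
      _ ≤ _ := finrank_mono (Finset.le_sup (f := fun i => span F (range (blockOf M j i).col))
          (Finset.mem_insert_self j S))
  have hV : finrank F (V.map π) ≤ S.card * b := by
    rw [map_span_col_thickCols_fromRows]
    calc _ ≤ ∑ i ∈ S, finrank F (span F (range (blockOf M j i).col)) :=
          finrank_finset_sup_le_sum _ _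
      _ ≤ ∑ _i ∈ S, b := Finset.sum_le_sum fun i hi =>
          (rank_eq_finrank_span_cols _).symm.trans_le (hjS i hi)
      _ = S.card * b := by rw [Finset.sum_const, smul_eq_mul]
  have : FiniteDimensional F V' := .span_of_finite F (finite_range _)
  have := finrank_map_add_finrank_le_finrank_add_finrank_map π hVV'
  have := finrank_mono hVV'
  omega

variable {M} in
theorem rank_thickCols_initialBlocks_add_sum_le {b : ℕ} (hM : IsRepairForm n a b M) {m j : ℕ}
    (hmj : m ≤ j) (hjn : j ≤ n) :
    (thickCols (fromRows H M) (initialBlocks n m)).rank +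
        ∑ i ∈ Finset.Icc (m + 1) j, (a - (i - 1) * b) ≤
      (thickCols (fromRows H M) (initialBlocks n j)).rank := by
  induction j, hmj using Nat.le_induction with
  | base => simp
  | succ j hmj ih =>
    have hstep := rank_thickCols_add_tsub_le_rank_thickCols_insert H M (S := initialBlocks n j)
      (hM.1 ⟨j, hjn⟩) fun i hi => hM.2 _ i fun h => by subst h; simp [initialBlocks] at hi
    rw [card_initialBlocks (by omega), ← initialBlocks_succ hjn] at hstep
    rw [Finset.sum_Icc_succ_top (by omega), Nat.add_sub_cancel]
    have := ih (by omega)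
    omega

end ThickColumns

theorem stmt5_general (F : Type*) [Field F] (n k a b : ℕ)
    (ι : Type*) (H : Matrix ι (Fin n × Fin a) F)
    (h1 : ∀ S : Finset (Fin n), S.card = n - k →
      (H.submatrix id
          (fun p : {p : Fin n × Fin a // p.1 ∈ S} => (p : Fin n × Fin a))).rank
        = (n - k) * a)
    (h2 : ∃ M : Matrix (Fin n × Fin a) (Fin n × Fin a) F, IsRepairForm n a b M ∧
      ∀ r : Fin n × Fin a,
        (M r : (Fin n × Fin a) → F) ∈
          Submodule.span F (Set.range (fun i => (H i : (Fin n × Fin a) → F)))) :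
    (n - k) * a + ∑ j ∈ Finset.Icc (n - k + 1) n, (a - (j - 1) * b) ≤ H.rank := by
  obtain ⟨M, hM, hrows⟩ := h2
  have hbase : (n - k) * a ≤ (thickCols (fromRows H M) (initialBlocks n (n - k))).rank :=
    calc (n - k) * a = (thickCols H (initialBlocks n (n - k))).rank :=
          (h1 _ (card_initialBlocks (Nat.sub_le n k))).symm
      _ ≤ _ := rank_submatrix_le (thickCols (fromRows H M) _) Sum.inl id
  calc (n - k) * a + ∑ j ∈ Finset.Icc (n - k + 1) n, (a - (j - 1) * b)
      ≤ (thickCols (fromRows H M) (initialBlocks n n)).rank :=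
        (Nat.add_le_add_right hbase _).trans
          (rank_thickCols_initialBlocks_add_sum_le H hM (Nat.sub_le n k) le_rfl)
    _ ≤ (fromRows H M).rank := rank_submatrix_le _ _ _
    _ ≤ H.rank := rank_fromRows_le_of_row_mem_span H M hrows

/-- if every `(n-k)`-subset of thick columns of `H` has rank `(n-k)α`, and
the row space of `H` contains all rows of some matrix of repair form, then
`rank H ≥ (n-k)α + ∑_{j=n-k+1}^{n} max(α - (j-1)β, 0)`. -/
theorem stmt5 (F : Type*) [Field F] (n k a b : ℕ)
    (hk1 : 1 ≤ k) (hk2 : k ≤ n - 1) (ha : 1 ≤ a) (hb : 1 ≤ b)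
    (ι : Type*) [Fintype ι] (H : Matrix ι (Fin n × Fin a) F)
    (h1 : ∀ S : Finset (Fin n), S.card = n - k →
      (H.submatrix id
          (fun p : {p : Fin n × Fin a // p.1 ∈ S} => (p : Fin n × Fin a))).rank
        = (n - k) * a)
    (h2 : ∃ M : Matrix (Fin n × Fin a) (Fin n × Fin a) F, IsRepairForm n a b M ∧
      ∀ r : Fin n × Fin a,
        (M r : (Fin n × Fin a) → F) ∈
          Submodule.span F (Set.range (fun i => (H i : (Fin n × Fin a) → F)))) :
    (n - k) * a + ∑ j ∈ Finset.Icc (n - k + 1) n, (a - (j - 1) * b) ≤ H.rank :=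
  stmt5_general F n k a b ι H h1 h2
end

section
/- Let F be a field, α ≥ 1, and let H = [H_1 H_2 H_3 H_4] be a matrix over F with 4α rows, where each thick column H_j is a 4α × c_j matrix partitioned into four α-row blocks A_{1,j}, A_{2,j}, A_{3,j}, A_{4,j}. Suppose that for each j ∈ {1, 2, 3, 4}: (i) the columns of H_j are linearly independent, and (ii) rank(H_j) = rank(A_{j,j}). Then 3·rank(H) ≥ 2·Σ_{j=1}^{4} rank(A_{j,j}) − Σ_{j=2}^{4} Σ_{ℓ=1}^{j−1} rank(A_{j,ℓ}). -/
/-!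
Let `W j` be the column space of `H_j` (indices from `0`) and `π j` the projection onto the
`j`-th row block, so that `rank A_{i,j} = dim π_i(W_j)`, `rank H = dim V` for `V = ⨆ j, W j`,
and the hypothesis says that `π j` is injective on `W j`. The inequality is a dimension count in
`V`. Rank–nullity turns `dim π_k(W_l)` into `dim W_l - dim (W_l ⊓ ker π_k)`. The modular law,
applied inside `W₀ ⊓ W₁`, inside `V ⊓ ker π_k` and inside the image of `V` under `(π₂, π₃)`,
bounds these intersections by `dim π₁(W₀)`, `dim π₃(W₂)` and `dim V - dim W_k`; every bound
comes from injectivity of some `π_j` on `W_j`.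
-/

open Submodule LinearMap Module

namespace Submodule

variable {F M N P : Type*} [Field F] [AddCommGroup M] [Module F M]
  [AddCommGroup N] [Module F N] [AddCommGroup P] [Module F P]

theorem finrank_map_add_finrank_inf_ker_s10 (f : M →ₗ[F] N) (W : Submodule F M)
    [FiniteDimensional F W] :
    finrank F (W.map f) + finrank F ↥(W ⊓ ker f) = finrank F W := by
  have h := finrank_range_add_finrank_ker (f.domRestrict W)
  rw [range_domRestrict, ker_domRestrict] at h
  rw [← h, ← (comapSubtypeEquivOfLe (inf_le_left : W ⊓ ker f ≤ W)).finrank_eq,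
    comap_inf, comap_subtype_self, top_inf_eq]

theorem finrank_map_eq_of_disjoint_ker {f : M →ₗ[F] N} {W : Submodule F M}
    [FiniteDimensional F W] (h : Disjoint W (ker f)) :
    finrank F (W.map f) = finrank F W := by
  have := finrank_map_add_finrank_inf_ker_s10 f W
  rwa [h.eq_bot, finrank_bot, add_zero] at this

theorem finrank_inf_le_finrank_map {f : M →ₗ[F] N} {A B : Submodule F M}
    [FiniteDimensional F A] (hB : Disjoint B (ker f)) :
    finrank F ↥(A ⊓ B) ≤ finrank F (A.map f) := by
  have : FiniteDimensional F ↥(A ⊓ B) := finiteDimensional_of_le inf_le_left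
  rw [← finrank_map_eq_of_disjoint_ker (hB.mono_left inf_le_right)]
  exact finrank_mono (map_mono inf_le_left)

theorem finrank_add_finrank_le_finrank_inf_add {X Y Z : Submodule F M}
    [FiniteDimensional F Z] (hX : X ≤ Z) (hY : Y ≤ Z) :
    finrank F X + finrank F Y ≤ finrank F ↥(X ⊓ Y) + finrank F Z := by
  have : FiniteDimensional F X := finiteDimensional_of_le hX
  have : FiniteDimensional F Y := finiteDimensional_of_le hY
  rw [← finrank_sup_add_finrank_inf_eq, add_comm]
  exact Nat.add_le_add_left (finrank_mono (sup_le hX hY)) _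

theorem finrank_inf_ker_inf_ker_add_le [FiniteDimensional F M] {f : M →ₗ[F] N}
    {g : M →ₗ[F] P} {V W₁ W₂ : Submodule F M} (h₁ : W₁ ≤ V) (h₂ : W₂ ≤ V)
    (hf : Disjoint W₁ (ker f)) (hg : Disjoint W₂ (ker g)) :
    finrank F ↥(V ⊓ (ker f ⊓ ker g)) + finrank F W₁ + finrank F W₂
      ≤ finrank F V + finrank F (W₁.map g) := by
  set p := f.prod g
  have hp : ker p = ker f ⊓ ker g := ker_prod f g
  have hpW₁ : finrank F (W₁.map p) = finrank F W₁ :=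
    finrank_map_eq_of_disjoint_ker (hf.mono_right (hp ▸ inf_le_left))
  have hpW₂ : finrank F (W₂.map p) = finrank F W₂ :=
    finrank_map_eq_of_disjoint_ker (hg.mono_right (hp ▸ inf_le_right))
  have hsnd : Disjoint (W₂.map p) (ker (LinearMap.snd F N P)) := by
    refine disjoint_ker.mpr ?_
    rintro _ ⟨x, hx, rfl⟩ hgx
    simp [disjoint_ker.mp hg x hx hgx]
  have hinter : finrank F ↥(W₁.map p ⊓ W₂.map p) ≤ finrank F (W₁.map g) := by
    have := finrank_inf_le_finrank_map (A := W₁.map p) hsnd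
    rwa [← map_comp, snd_prod] at this
  have hsum := finrank_add_finrank_le_finrank_inf_add (map_mono (f := p) h₁) (map_mono h₂)
  have hV := finrank_map_add_finrank_inf_ker_s10 p V
  rw [hp] at hV
  omega

end Submodule

theorem two_mul_sum_finrank_le {F M : Type*} [Field F] [AddCommGroup M] [Module F M]
    [FiniteDimensional F M] {N : Fin 4 → Type*} [∀ j, AddCommGroup (N j)]
    [∀ j, Module F (N j)] (π : ∀ j, M →ₗ[F] N j) (W : Fin 4 → Submodule F M)
    (hW : ∀ j, Disjoint (W j) (ker (π j))) :
    2 * ∑ j, finrank F (W j)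
      ≤ 3 * finrank F ↥(⨆ j, W j)
        + ∑ j, ∑ l ∈ Finset.univ.filter (· < j), finrank F ((W l).map (π j)) := by
  set V := ⨆ j, W j
  have hWV : ∀ j, W j ≤ V := le_iSup W
  set X := fun j => (W 0 ⊓ ker (π j)) ⊓ (W 1 ⊓ ker (π j))
  have h01 : finrank F ↥(W 0 ⊓ W 1) ≤ finrank F ((W 0).map (π 1)) :=
    finrank_inf_le_finrank_map (hW 1)
  have hX : finrank F (X 2) + finrank F (X 3)
      ≤ finrank F ↥(X 2 ⊓ X 3) + finrank F ↥(W 0 ⊓ W 1) :=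
    finrank_add_finrank_le_finrank_inf_add (inf_le_inf inf_le_left inf_le_left)
      (inf_le_inf inf_le_left inf_le_left)
  have hX23 : finrank F ↥(X 2 ⊓ X 3) ≤ finrank F ↥(V ⊓ (ker (π 2) ⊓ ker (π 3))) :=
    finrank_mono fun x hx => by
      simp only [X, mem_inf] at hx ⊢
      exact ⟨hWV 0 hx.1.1.1, hx.1.1.2, hx.2.1.2⟩
  have hWK : ∀ k, finrank F ↥(W 0 ⊓ ker (π k)) + finrank F ↥(W 1 ⊓ ker (π k))
      ≤ finrank F (X k) + finrank F ↥(V ⊓ ker (π k)) := fun k =>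
    finrank_add_finrank_le_finrank_inf_add (inf_le_inf_right _ (hWV 0))
      (inf_le_inf_right _ (hWV 1))
  have hrk : ∀ k l,
      finrank F ((W l).map (π k)) + finrank F ↥(W l ⊓ ker (π k)) = finrank F (W l) :=
    fun k l => finrank_map_add_finrank_inf_ker_s10 (π k) (W l)
  have hVK : ∀ k, finrank F ↥(V ⊓ ker (π k)) + finrank F (W k) ≤ finrank F V := fun k => by
    have := finrank_add_finrank_le_finrank_inf_add (inf_le_left : V ⊓ ker (π k) ≤ V) (hWV k)
    rwa [(((hW k).symm.mono_left inf_le_right).eq_bot), finrank_bot, zero_add] at this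
  have h23 := finrank_inf_ker_inf_ker_add_le (hWV 2) (hWV 3) (hW 2) (hW 3)
  simp only [Finset.sum_filter, Fin.sum_univ_four, Fin.isValue, Fin.reduceLT, if_true, if_false]
  linarith [hWK 2, hWK 3, hrk 2 0, hrk 2 1, hrk 3 0, hrk 3 1, hVK 2, hVK 3]

namespace Matrix

variable {F m m' n : Type*} [Field F] [Fintype n]

theorem rank_submatrix_id_eq_finrank_map_range (A : Matrix m n F) (e : m' → m) :
    (A.submatrix e _root_.id).rank = finrank F ((range A.mulVecLin).map (funLeft F F e)) := by
  rw [rank, ← range_comp]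
  rfl

theorem rank_sigma_cols_eq_finrank_iSup {ι : Type*} [Fintype ι] {n : ι → Type*}
    [∀ i, Fintype (n i)] (H : ∀ i, Matrix m (n i) F) :
    (of fun r (p : Σ i, n i) => H p.1 r p.2).rank
      = finrank F ↥(⨆ i, range (H i).mulVecLin) := by
  have hcol : (of fun r (p : Σ i, n i) => H p.1 r p.2).col = fun p r => H p.1 r p.2 := rfl
  rw [rank, range_mulVecLin, hcol, Set.range_sigma_eq_iUnion_range, span_iUnion]
  exact congrArg (fun S : Submodule F (m → F) => finrank F S)
    (iSup_congr fun i => (range_mulVecLin (H i)).symm)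

end Matrix

theorem stmt10_general (F : Type*) [Field F] (a : ℕ)
    (c : Fin 4 → ℕ)
    (Hcol : ∀ j : Fin 4, Matrix (Fin 4 × Fin a) (Fin (c j)) F)
    (hrank : ∀ j : Fin 4,
      (Hcol j).rank = (Matrix.of fun (x : Fin a) (l : Fin (c j)) => Hcol j (j, x) l).rank) :
    3 * ((Matrix.of fun (r : Fin 4 × Fin a) (p : Σ j : Fin 4, Fin (c j)) =>
          Hcol p.1 r p.2).rank : ℤ)
      ≥ 2 * ∑ j : Fin 4,
            ((Matrix.of fun (x : Fin a) (l : Fin (c j)) => Hcol j (j, x) l).rank : ℤ)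
        - ∑ j : Fin 4, ∑ l ∈ Finset.univ.filter (fun l : Fin 4 => l < j),
            ((Matrix.of fun (x : Fin a) (y : Fin (c l)) => Hcol l (j, x) y).rank : ℤ) := by
  set W := fun j => range (Hcol j).mulVecLin
  set π := fun j : Fin 4 => funLeft F F (fun x : Fin a => (j, x))
  have hblock : ∀ j l, (Matrix.of fun (x : Fin a) (y : Fin (c l)) => Hcol l (j, x) y).rank
      = finrank F ((W l).map (π j)) := fun j l =>
    Matrix.rank_submatrix_id_eq_finrank_map_range (Hcol l) _
  have hdisj : ∀ j, Disjoint (W j) (ker (π j)) := fun j => by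
    have := finrank_map_add_finrank_inf_ker_s10 (π j) (W j)
    have hWj : finrank F (W j) = (Hcol j).rank := rfl
    rw [← hblock, ← hrank j, hWj] at this
    rw [disjoint_iff, ← finrank_eq_zero]
    omega
  have key := two_mul_sum_finrank_le π W hdisj
  simp only [Matrix.rank_sigma_cols_eq_finrank_iSup, hblock,
    finrank_map_eq_of_disjoint_ker (hdisj _)]
  rw [ge_iff_le, sub_le_iff_le_add]
  exact_mod_cast key

/-- Theorem 4 for `(4,3,3)`: let `H = [H₁ H₂ H₃ H₄]` be a matrix with
`4α` rows whose `j`-th thick column `H_j` has `c j` linearly independent columns and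
satisfies `rank(H_j) = rank(A_{j,j})`, where `A_{i,j}` is the `i`-th `α`-row block of
`H_j`. Then `3 rank(H) ≥ 2 ∑_j rank(A_{j,j}) - ∑_{j} ∑_{ℓ<j} rank(A_{j,ℓ})`. -/
theorem stmt10 (F : Type*) [Field F] (a : ℕ) (ha : 1 ≤ a)
    (c : Fin 4 → ℕ)
    (Hcol : ∀ j : Fin 4, Matrix (Fin 4 × Fin a) (Fin (c j)) F)
    (hindep : ∀ j : Fin 4,
      LinearIndependent F (fun l : Fin (c j) => (fun r => Hcol j r l : (Fin 4 × Fin a) → F)))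
    (hrank : ∀ j : Fin 4,
      (Hcol j).rank = (Matrix.of fun (x : Fin a) (l : Fin (c j)) => Hcol j (j, x) l).rank) :
    3 * ((Matrix.of fun (r : Fin 4 × Fin a) (p : Σ j : Fin 4, Fin (c j)) =>
          Hcol p.1 r p.2).rank : ℤ)
      ≥ 2 * ∑ j : Fin 4,
            ((Matrix.of fun (x : Fin a) (l : Fin (c j)) => Hcol j (j, x) l).rank : ℤ)
        - ∑ j : Fin 4, ∑ l ∈ Finset.univ.filter (fun l : Fin 4 => l < j),
            ((Matrix.of fun (x : Fin a) (y : Fin (c l)) => Hcol l (j, x) y).rank : ℤ) :=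
  stmt10_general F a c Hcol hrank
end

section
/- In the general intersection construction (for parameters n ≥ 4 and α), for every t with 3 ≤ t ≤ n−1 and every j with n−t+2 ≤ j ≤ n: Σ_{ℓ=n−t+1}^{j−1} ρ(A^(t)_{j,ℓ}) ≤ Σ_{ℓ=n−t}^{j−1} ρ(A^(t+1)_{j,ℓ}) − ρ(A^(t)_{j,j}). -/
/-! The rank of the `j`-th block row of a thick column is `f (S(column))`, where
`f V = dim π_j(V)` for the projection `π_j` onto the `j`-th thick row, and `f` is submodular.
Writing `U_l = S(H⁽ᵗ⁺¹⁾_l)` and `W_l = U_{n-t-1} + ⋯ + U_{l-1}`, the hypothesis says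
`S(H⁽ᵗ⁾_l) = U_l ⊓ W_l`; since `W_{l+1} = U_l ⊔ W_l`, submodularity telescopes to
`∑_l f (U_l ⊓ W_l) + f W_j ≤ ∑_l f U_l`, and `S(H⁽ᵗ⁾_j) ≤ W_j` bounds the diagonal term. -/

open scoped BigOperators

/-- Column span of a matrix with finitely many columns, as a subspace of `R → F`. -/
def colSpan (F : Type*) [Field F] {R : Type*} {m : ℕ} (M : Matrix R (Fin m) F) :
    Submodule F (R → F) :=
  Submodule.span F (Set.range fun l : Fin m => fun r => M r l)

/-- The concatenation of the thick columns `Hcol t j'` of `H⁽ᵗ⁾` for `lo ≤ j' ≤ hi`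
(all indices 0-indexed), i.e. the restriction of `H⁽ᵗ⁾` to a set of thick columns. -/
def restMat (F : Type*) [Field F] (n a : ℕ) (c : ℕ → Fin n → ℕ)
    (Hcol : ∀ t : ℕ, ∀ j : Fin n, Matrix (Fin n × Fin a) (Fin (c t j)) F)
    (t lo hi : ℕ) :
    Matrix (Fin n × Fin a)
      (Σ j' : {j' : Fin n // lo ≤ (j' : ℕ) ∧ (j' : ℕ) ≤ hi}, Fin (c t j'.val)) F :=
  Matrix.of fun r p => Hcol t p.1.val r p.2

open Module Finset

section Submodular

variable {α ι : Type*} [Lattice α] [OrderBot α] [LinearOrder ι]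

theorem sum_inf_sup_lt_add_le_sum (f : α → ℕ)
    (hf : ∀ x y, f (x ⊓ y) + f (x ⊔ y) ≤ f x + f y) (U : ι → α) (s : Finset ι) :
    ∑ i ∈ s, f (U i ⊓ (s.filter (· < i)).sup U) + f (s.sup U) ≤ ∑ i ∈ s, f (U i) + f ⊥ := by
  induction s using Finset.induction_on_max with
  | empty => simp
  | insert a s hlt ih =>
    have ha : a ∉ s := fun h => lt_irrefl a (hlt a h)
    have hbelow_a : (insert a s).filter (· < a) = s := by
      rw [filter_insert, if_neg (lt_irrefl a), filter_true_of_mem hlt]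
    have hbelow : ∀ i ∈ s, (insert a s).filter (· < i) = s.filter (· < i) := fun i hi => by
      rw [filter_insert, if_neg (lt_asymm (hlt i hi))]
    rw [sum_insert ha, sum_insert ha, hbelow_a, sup_insert,
      sum_congr rfl fun i hi => by rw [hbelow i hi]]
    have := hf (U a) (s.sup U)
    omega

theorem sum_inf_sup_lt_add_le_sum_of_subset (f : α → ℕ)
    (hf : ∀ x y, f (x ⊓ y) + f (x ⊔ y) ≤ f x + f y) (hmono : Monotone f) (hbot : f ⊥ = 0)
    (U : ι → α) {s' s : Finset ι} (hs : s' ⊆ s) {y : α} (hy : y ≤ s.sup U) :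
    ∑ i ∈ s', f (U i ⊓ (s.filter (· < i)).sup U) + f y ≤ ∑ i ∈ s, f (U i) := by
  have hsub := sum_le_sum_of_subset (f := fun i => f (U i ⊓ (s.filter (· < i)).sup U)) hs
  have := sum_inf_sup_lt_add_le_sum f hf U s
  have := hmono hy
  omega

end Submodular

theorem finrank_map_inf_add_finrank_map_sup_le {K V W : Type*} [Field K] [AddCommGroup V]
    [Module K V] [AddCommGroup W] [Module K W] [FiniteDimensional K W]
    (π : V →ₗ[K] W) (A B : Submodule K V) :
    finrank K ((A ⊓ B).map π) + finrank K ((A ⊔ B).map π)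
      ≤ finrank K (A.map π) + finrank K (B.map π) := by
  have hinf := Submodule.finrank_mono (Submodule.map_inf_le π (p := A) (q := B))
  have hdim := Submodule.finrank_sup_add_finrank_inf_eq (A.map π) (B.map π)
  rw [Submodule.map_sup]
  omega

theorem rank_of_rows_eq_finrank_map_colSpan {F R R' : Type*} [Field F] [Fintype R'] {m : ℕ}
    (M : Matrix R (Fin m) F) (e : R' → R) :
    (Matrix.of fun x y => M (e x) y).rank
      = finrank F ((colSpan F M).map (LinearMap.funLeft F F e)) := by
  rw [Matrix.rank_eq_finrank_span_cols, colSpan, Submodule.map_span, ← Set.range_comp]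
  rfl

theorem iSup_subtype_eq_sup_filter {α ι : Type*} [CompleteLattice α] [Fintype ι]
    (p : ι → Prop) [DecidablePred p] (U : ι → α) :
    ⨆ i : {i // p i}, U i = (univ.filter p).sup U := by
  rw [Finset.sup_eq_iSup, iSup_subtype]
  simp only [mem_filter, mem_univ, true_and]

theorem stmt16_general (F : Type*) [Field F] (n a : ℕ)
    (c : ℕ → Fin n → ℕ)
    (Hcol : ∀ t : ℕ, ∀ j : Fin n, Matrix (Fin n × Fin a) (Fin (c t j)) F)
    -- for `3 ≤ t ≤ n-1`, the columns of the `j`-th thick column of `H⁽ᵗ⁾` form a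
    -- basis of `S(H⁽ᵗ⁺¹⁾_j) ∩ S(H⁽ᵗ⁺¹⁾|_{{n-t, …, j-1}})` (set 0-indexed here)
    (hbasis : ∀ t : ℕ, 3 ≤ t → t ≤ n - 1 → ∀ j : Fin n, n - t ≤ (j : ℕ) →
      LinearIndependent F
        (fun l : Fin (c t j) => (fun r => Hcol t j r l : (Fin n × Fin a) → F)) ∧
      colSpan F (Hcol t j)
        = colSpan F (Hcol (t + 1) j) ⊓
            ⨆ j' : {j' : Fin n // n - t - 1 ≤ (j' : ℕ) ∧ (j' : ℕ) < (j : ℕ)},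
              colSpan F (Hcol (t + 1) j'.val))
    :
    ∀ t : ℕ, 3 ≤ t → t ≤ n - 1 → ∀ j : Fin n, n - t + 1 ≤ (j : ℕ) →
      (∑ l ∈ Finset.univ.filter (fun l : Fin n => n - t ≤ (l : ℕ) ∧ (l : ℕ) < (j : ℕ)),
          ((Matrix.of fun (x : Fin a) (y : Fin (c t l)) => Hcol t l (j, x) y).rank : ℤ))
        ≤ (∑ l ∈ Finset.univ.filter
              (fun l : Fin n => n - t - 1 ≤ (l : ℕ) ∧ (l : ℕ) < (j : ℕ)),
            ((Matrix.of fun (x : Fin a) (y : Fin (c (t + 1) l)) =>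
                Hcol (t + 1) l (j, x) y).rank : ℤ))
          - ((Matrix.of fun (x : Fin a) (l : Fin (c t j)) => Hcol t j (j, x) l).rank : ℤ) := by
  intro t ht3 htn j hj
  let U : Fin n → Submodule F (Fin n × Fin a → F) := fun l => colSpan F (Hcol (t + 1) l)
  let s := univ.filter fun l : Fin n => n - t - 1 ≤ (l : ℕ) ∧ (l : ℕ) < j
  have hspan : ∀ l : Fin n, n - t ≤ (l : ℕ) → colSpan F (Hcol t l)
      = U l ⊓ (univ.filter fun l' : Fin n => n - t - 1 ≤ (l' : ℕ) ∧ (l' : ℕ) < l).sup U :=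
    fun l hl => by rw [(hbasis t ht3 htn l hl).2, iSup_subtype_eq_sup_filter _ U]
  have hpast : ∀ l ∈ univ.filter fun l : Fin n => n - t ≤ (l : ℕ) ∧ (l : ℕ) < j,
      colSpan F (Hcol t l) = U l ⊓ (s.filter (· < l)).sup U := by
    intro l hl
    rw [mem_filter] at hl
    rw [hspan l hl.2.1, filter_filter]
    congr 3
    ext l'
    simp only [Fin.lt_def]
    omega
  have hrank := sum_inf_sup_lt_add_le_sum_of_subset
    (fun V => finrank F (V.map (LinearMap.funLeft F F (Prod.mk j))))
    (finrank_map_inf_add_finrank_map_sup_le _)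
    (fun A B h => Submodule.finrank_mono (Submodule.map_mono h)) (by simp) U
    (s' := univ.filter fun l : Fin n => n - t ≤ (l : ℕ) ∧ (l : ℕ) < j)
    (fun l => by simp only [mem_filter, mem_univ, true_and]; omega)
    ((hspan j (by omega)).trans_le inf_le_right)
  simp only [rank_of_rows_eq_finrank_map_colSpan]
  rw [le_sub_iff_add_le, sum_congr rfl fun l hl => by rw [hpast l hl]]
  exact_mod_cast hrank

/-- Lemma 4c: in the general intersection construction, for `3 ≤ t ≤ n-1`
and each thick column `j` of `H⁽ᵗ⁾` other than the first,
`∑_{ℓ} ρ(A⁽ᵗ⁾_{j,ℓ}) ≤ ∑_{ℓ'} ρ(A⁽ᵗ⁺¹⁾_{j,ℓ'}) - ρ(A⁽ᵗ⁾_{j,j})`, where `ℓ` ranges over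
the thick columns of `H⁽ᵗ⁾` before `j` and `ℓ'` over those of `H⁽ᵗ⁺¹⁾` before `j`
(all indices 0-indexed below). -/
theorem stmt16 (F : Type*) [Field F] (n a : ℕ) (hn : 4 ≤ n) (ha : 1 ≤ a)
    (c : ℕ → Fin n → ℕ)
    (Hcol : ∀ t : ℕ, ∀ j : Fin n, Matrix (Fin n × Fin a) (Fin (c t j)) F)
    -- the top level `H⁽ⁿ⁾` has thick columns of width `α` ...
    (hcn : ∀ j : Fin n, c n j = a)
    -- ... and its diagonal blocks `A⁽ⁿ⁾_{i,i}` equal the identity `I_α`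
    (hdiag : ∀ i : Fin n, ∀ x : Fin a, ∀ y : Fin (c n i),
      Hcol n i (i, x) y = if (x : ℕ) = (y : ℕ) then 1 else 0)
    -- for `3 ≤ t ≤ n-1`, the columns of the `j`-th thick column of `H⁽ᵗ⁾` form a
    -- basis of `S(H⁽ᵗ⁺¹⁾_j) ∩ S(H⁽ᵗ⁺¹⁾|_{{n-t, …, j-1}})` (set 0-indexed here)
    (hbasis : ∀ t : ℕ, 3 ≤ t → t ≤ n - 1 → ∀ j : Fin n, n - t ≤ (j : ℕ) →
      LinearIndependent F
        (fun l : Fin (c t j) => (fun r => Hcol t j r l : (Fin n × Fin a) → F)) ∧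
      colSpan F (Hcol t j)
        = colSpan F (Hcol (t + 1) j) ⊓
            ⨆ j' : {j' : Fin n // n - t - 1 ≤ (j' : ℕ) ∧ (j' : ℕ) < (j : ℕ)},
              colSpan F (Hcol (t + 1) j'.val))
    :
    ∀ t : ℕ, 3 ≤ t → t ≤ n - 1 → ∀ j : Fin n, n - t + 1 ≤ (j : ℕ) →
      (∑ l ∈ Finset.univ.filter (fun l : Fin n => n - t ≤ (l : ℕ) ∧ (l : ℕ) < (j : ℕ)),
          ((Matrix.of fun (x : Fin a) (y : Fin (c t l)) => Hcol t l (j, x) y).rank : ℤ))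
        ≤ (∑ l ∈ Finset.univ.filter
              (fun l : Fin n => n - t - 1 ≤ (l : ℕ) ∧ (l : ℕ) < (j : ℕ)),
            ((Matrix.of fun (x : Fin a) (y : Fin (c (t + 1) l)) =>
                Hcol (t + 1) l (j, x) y).rank : ℤ))
          - ((Matrix.of fun (x : Fin a) (l : Fin (c t j)) => Hcol t j (j, x) l).rank : ℤ) :=
  stmt16_general F n a c Hcol hbasis
end
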